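/- Let V be a finite set of N nodes partitioned into two sensitive groups S₀ and S₁ of sizes N₀ ≥ 1 and N₁ ≥ 1, and fix α > 0. For F : V → ℝ^d, define the simplified fairness regularizer h̃_f(F) = −(2/(N₀N₁))·Σ_{i∈S₀} Σ_{j∈S₁} k(F_i, F_j). Define P̃(F) ∈ ℝ^{V×V} by: for i ≠ j, P̃(F)_{ij} = k(F_i, F_j)/(N₀N₁) if i and j lie in different groups and P̃(F)_{ij} = 0 if i and j lie in the same group; P̃(F)_{ii} = −Σ_{m≠i} P̃(F)_{im}. Then for every node i, the negative gradient of h̃_f with respect to the row F_i satisfies −∇_{F_i} h̃_f(F) = 4α·Σ_{j∈V} P̃(F)_{ij}·F_j. -/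

import Mathlib

open Finset

/-- RBF kernel `k(x,y) = exp(-α‖x-y‖²)`. -/
noncomputable def ker {d : ℕ} (α : ℝ) (x y : EuclideanSpace ℝ (Fin d)) : ℝ :=
  Real.exp (-α * ‖x - y‖ ^ 2)

/-- The sensitive group `S_b`, where group membership is given by `grp`
(`false` encodes `S₀` and `true` encodes `S₁`). -/
def sgrp {V : Type*} [Fintype V] (grp : V → Bool) (b : Bool) : Finset V :=
  Finset.univ.filter (fun i => grp i = b)

/-- The simplified fairness regularizer
`h̃_f(F) = −(2/(N₀N₁))·Σ_{i∈S₀}Σ_{j∈S₁} k(F_i,F_j)`. -/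
noncomputable def hTilde {V : Type*} [Fintype V] {d : ℕ} (α : ℝ) (grp : V → Bool)
    (F : V → EuclideanSpace ℝ (Fin d)) : ℝ :=
  -(2 / (((sgrp grp false).card : ℝ) * ((sgrp grp true).card : ℝ))) *
    ∑ i ∈ sgrp grp false, ∑ j ∈ sgrp grp true, ker α (F i) (F j)

/-- Off-diagonal entries of `P̃(F)`: `0` if `i, j` lie in the same group, and
`k(F_i,F_j)/(N₀N₁)` if they lie in different groups. -/
noncomputable def Ptoff {V : Type*} [Fintype V] {d : ℕ} (α : ℝ) (grp : V → Bool)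
    (F : V → EuclideanSpace ℝ (Fin d)) (i j : V) : ℝ :=
  if grp i = grp j then 0
  else ker α (F i) (F j) / (((sgrp grp false).card : ℝ) * ((sgrp grp true).card : ℝ))

/-- The matrix `P̃(F)`: off-diagonal entries given by `Ptoff` and diagonal entries
`P̃(F)_{ii} = −Σ_{m≠i} P̃(F)_{im}`. -/
noncomputable def Ptmat {V : Type*} [Fintype V] [DecidableEq V] {d : ℕ} (α : ℝ)
    (grp : V → Bool) (F : V → EuclideanSpace ℝ (Fin d)) (i j : V) : ℝ :=
  if i = j then -∑ m ∈ Finset.univ.erase i, Ptoff α grp F i m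
  else Ptoff α grp F i j

/-! Only the terms of `h̃_f` that involve node `i` depend on `F_i`; they add up to
`-(2/(N₀N₁)) Σ_{m in the other group} k(F_i, F_m)`, and `∇ₓ k(x, y) = -2α k(x, y) (x - y)`.
Since every row of `P̃` sums to zero, `Σ_j P̃_ij F_j = Σ_j P̃_ij (F_j - F_i)`, which matches the
gradient term by term. -/

open Function

lemma ker_comm {d : ℕ} (α : ℝ) (x y : EuclideanSpace ℝ (Fin d)) : ker α x y = ker α y x := by
  simp only [ker, norm_sub_rev]

lemma hasGradientAt_ker {d : ℕ} (α : ℝ) (y p : EuclideanSpace ℝ (Fin d)) :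
    HasGradientAt (fun x => ker α x y) ((-(2 * α) * ker α p y) • (p - y)) p := by
  rw [hasGradientAt_iff_hasFDerivAt]
  have hsq := ((hasFDerivAt_id p).sub_const y).norm_sq.const_mul (-α)
  refine ((Real.hasDerivAt_exp _).comp_hasFDerivAt p hsq).congr_fderiv ?_
  ext v
  simp only [ker, id_eq, ContinuousLinearMap.comp_id, neg_smul, smul_neg, neg_apply, smul_apply,
    coe_innerSL_apply, nsmul_eq_mul, smul_eq_mul, map_smul,
    InnerProductSpace.toDual_apply_apply]
  ring

lemma hasGradientAt_const_mul_sum_ker_add {ι : Type*} {d : ℕ} (α c K : ℝ) (s : Finset ι)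
    (G : ι → EuclideanSpace ℝ (Fin d)) (p : EuclideanSpace ℝ (Fin d)) :
    HasGradientAt (fun x => c * ∑ m ∈ s, ker α x (G m) + K)
      (c • ∑ m ∈ s, (-(2 * α) * ker α p (G m)) • (p - G m)) p := by
  rw [hasGradientAt_iff_hasFDerivAt, map_smul, map_sum]
  exact ((HasFDerivAt.fun_sum fun m _ => (hasGradientAt_ker α (G m) p).hasFDerivAt).const_mul
    c).add_const K

lemma sum_sum_update_of_mem_left {ι E β : Type*} [DecidableEq ι] [AddCommMonoid β]
    {s t : Finset ι} (hst : Disjoint s t) {i : ι} (hi : i ∈ s) (f : E → E → β) (F : ι → E)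
    (x : E) :
    ∑ a ∈ s, ∑ b ∈ t, f (update F i x a) (update F i x b)
      = ∑ b ∈ t, f x (F b) + ∑ a ∈ s.erase i, ∑ b ∈ t, f (F a) (F b) := by
  have hit : ∀ b ∈ t, b ≠ i := fun b hb hbi => disjoint_left.mp hst hi (hbi ▸ hb)
  rw [← add_sum_erase _ _ hi, update_self]
  congr 1
  · exact sum_congr rfl fun b hb => by rw [update_of_ne (hit b hb)]
  · refine sum_congr rfl fun a ha => sum_congr rfl fun b hb => ?_
    rw [update_of_ne (ne_of_mem_erase ha), update_of_ne (hit b hb)]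

lemma sum_sum_update_of_mem_right {ι E β : Type*} [DecidableEq ι] [AddCommMonoid β]
    {s t : Finset ι} (hst : Disjoint s t) {i : ι} (hi : i ∈ t) (f : E → E → β) (F : ι → E)
    (x : E) :
    ∑ a ∈ s, ∑ b ∈ t, f (update F i x a) (update F i x b)
      = ∑ a ∈ s, f (F a) x + ∑ a ∈ s, ∑ b ∈ t.erase i, f (F a) (F b) := by
  rw [sum_comm]
  exact (sum_sum_update_of_mem_left hst.symm hi (fun a b => f b a) F x).trans
    (by rw [sum_comm])

lemma disjoint_sgrp {V : Type*} [Fintype V] (grp : V → Bool) {b b' : Bool} (h : b ≠ b') :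
    Disjoint (sgrp grp b) (sgrp grp b') := by
  simp only [sgrp]
  exact disjoint_filter.mpr fun _ _ hb hb' => h (hb ▸ hb')

lemma exists_hTilde_update_eq {V : Type*} [Fintype V] [DecidableEq V] {d : ℕ} (α : ℝ)
    (grp : V → Bool) (F : V → EuclideanSpace ℝ (Fin d)) (i : V) :
    ∃ K : ℝ, ∀ x, hTilde α grp (update F i x)
      = -(2 / (((sgrp grp false).card : ℝ) * ((sgrp grp true).card : ℝ)))
          * ∑ m ∈ sgrp grp (!grp i), ker α x (F m) + K := by
  have hdisj := disjoint_sgrp grp Bool.false_ne_true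
  have hi : i ∈ sgrp grp (grp i) := by simp [sgrp]
  cases hb : grp i <;> rw [hb] at hi
  · exact ⟨_, fun x => by rw [hTilde, sum_sum_update_of_mem_left hdisj hi, mul_add]; rfl⟩
  · exact ⟨_, fun x => by
      simp only [hTilde, sum_sum_update_of_mem_right hdisj hi, ker_comm _ _ x, mul_add]; rfl⟩

lemma sum_Ptmat_smul {V E : Type*} [Fintype V] [DecidableEq V] [AddCommGroup E] [Module ℝ E]
    {d : ℕ} (α : ℝ) (grp : V → Bool) (F : V → EuclideanSpace ℝ (Fin d)) (i : V) (v : V → E) :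
    ∑ j, Ptmat α grp F i j • v j = ∑ j, Ptoff α grp F i j • (v j - v i) := by
  have hoff : ∀ j ∈ univ.erase i, Ptmat α grp F i j = Ptoff α grp F i j :=
    fun j hj => if_neg (ne_of_mem_erase hj).symm
  rw [← add_sum_erase _ _ (mem_univ i), ← add_sum_erase _ _ (mem_univ i),
    sum_congr rfl fun j hj => by rw [hoff j hj]]
  simp only [Ptmat, if_pos, sub_self, smul_zero, zero_add, smul_sub, sum_sub_distrib,
    ← sum_smul, neg_smul]
  abel

lemma sum_Ptoff_smul {V E : Type*} [Fintype V] [AddCommGroup E] [Module ℝ E] {d : ℕ} (α : ℝ)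
    (grp : V → Bool) (F : V → EuclideanSpace ℝ (Fin d)) (i : V) (v : V → E) :
    ∑ j, Ptoff α grp F i j • v j
      = ∑ j ∈ sgrp grp (!grp i),
          (ker α (F i) (F j) / (((sgrp grp false).card : ℝ) * ((sgrp grp true).card : ℝ))) • v j := by
  rw [sgrp, sum_filter]
  refine sum_congr rfl fun j _ => ?_
  cases hi : grp i <;> cases hj : grp j <;> simp [Ptoff, hi, hj]

theorem stmt4_general {V : Type*} [Fintype V] [DecidableEq V] {d : ℕ} {α : ℝ} (grp : V → Bool)
    (F : V → EuclideanSpace ℝ (Fin d)) (i : V) :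
    HasGradientAt (fun x : EuclideanSpace ℝ (Fin d) => hTilde α grp (Function.update F i x))
      (-((4 * α) • ∑ j : V, Ptmat α grp F i j • F j)) (F i) := by
  obtain ⟨K, hK⟩ := exists_hTilde_update_eq α grp F i
  simp only [hK]
  convert hasGradientAt_const_mul_sum_ker_add α _ K (sgrp grp (!grp i)) F (F i) using 1
  rw [sum_Ptmat_smul, sum_Ptoff_smul, smul_sum, smul_sum, ← sum_neg_distrib]
  refine sum_congr rfl fun m _ => ?_
  module

/-- For every node `i`, the negative gradient of `h̃_f` with respect to the row `F_i`
satisfies `−∇_{F_i} h̃_f(F) = 4α·Σ_{j∈V} P̃(F)_{ij}·F_j`. -/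
theorem stmt4 {V : Type*} [Fintype V] [DecidableEq V] {d : ℕ} {α : ℝ} (hα : 0 < α)
    (grp : V → Bool) (N₀ N₁ : ℕ)
    (hcard0 : (sgrp grp false).card = N₀) (hcard1 : (sgrp grp true).card = N₁)
    (hN₀ : 1 ≤ N₀) (hN₁ : 1 ≤ N₁)
    (F : V → EuclideanSpace ℝ (Fin d)) (i : V) :
    HasGradientAt (fun x : EuclideanSpace ℝ (Fin d) => hTilde α grp (Function.update F i x))
      (-((4 * α) • ∑ j : V, Ptmat α grp F i j • F j)) (F i) :=
  stmt4_general grp F i
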